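/- Assume the setting. Let z ∈ M and let V ⊆ Δ be a Borel set with ν^∞(V) > 0 such that for ν^∞-almost every t ∈ V and every w ∈ ω(z,t) there exist s ∈ Δ, a minimal domain ℳ and n ∈ ℕ with f^n(w,s) ∈ ⋃ℳ. Then there exist a minimal domain ℳ, a Borel set W ⊆ V with ν^∞(W) > 0, and m ∈ ℕ such that f^m(z,θ) ∈ ⋃ℳ for every θ ∈ W. -/

import Mathlib

open MeasureTheory Metric Set Filter Topology

noncomputable section

/-- The parameter space `T`: the closed `ε`-ball around `a` in `ℝⁿ`. -/
abbrev PSpace (n : ℕ) (a : EuclideanSpace ℝ (Fin n)) (ε : ℝ) : Type _ :=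
  ↥(Metric.closedBall a ε)

/-- Perturbed iterates: `pIter f k z t = f_{t_k} ∘ ⋯ ∘ f_{t_1} (z)`
(the sequence `t` is indexed from `0` here). -/
def pIter {M T : Type*} (f : M → T → M) : ℕ → M → (ℕ → T) → M
  | 0, z, _ => z
  | k + 1, z, t => f (pIter f k z t) (t k)

/-- An s-invariant domain for the randomly perturbed system: a finite tuple of
nonempty open sets with pairwise disjoint closures, permuted cyclically by all
perturbed iterates. -/
structure SInvDomain {M T : Type*} [TopologicalSpace M] (f : M → T → M) where
  r : ℕ
  r_pos : 0 < r
  U : Fin r → Set M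
  isOpen : ∀ i, IsOpen (U i)
  nonempty : ∀ i, (U i).Nonempty
  separated : ∀ i j : Fin r, i ≠ j → closure (U i) ∩ closure (U j) = ∅
  invariant : ∀ k : ℕ, 1 ≤ k → ∀ i : Fin r, ∀ z ∈ U i, ∀ t : ℕ → T,
    pIter f k z t ∈ U ⟨((i : ℕ) + k) % r, Nat.mod_lt _ r_pos⟩

/-- The union `⋃D` of the open sets forming an s-invariant domain. -/
def SInvDomain.carrier {M T : Type*} [TopologicalSpace M] {f : M → T → M}
    (D : SInvDomain f) : Set M := ⋃ i, D.U i

/-- The partial order `D ⪯ D'` on s-invariant domains. -/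
def DomLE {M T : Type*} [TopologicalSpace M] {f : M → T → M}
    (D D' : SInvDomain f) : Prop :=
  ∃ i i' : ℕ, ∀ k : ℕ, 1 ≤ k →
    D.U ⟨(i + k) % D.r, Nat.mod_lt _ D.r_pos⟩ ⊆ D'.U ⟨(i' + k) % D'.r, Nat.mod_lt _ D'.r_pos⟩

/-- Two s-invariant domains coincide up to cyclic shift. -/
def CyclicEq {M T : Type*} [TopologicalSpace M] {f : M → T → M}
    (D D' : SInvDomain f) : Prop :=
  ∃ i i' : ℕ, ∀ k : ℕ, 1 ≤ k →
    D.U ⟨(i + k) % D.r, Nat.mod_lt _ D.r_pos⟩ = D'.U ⟨(i' + k) % D'.r, Nat.mod_lt _ D'.r_pos⟩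

/-- A minimal invariant domain. -/
def MinimalDom {M T : Type*} [TopologicalSpace M] {f : M → T → M}
    (D : SInvDomain f) : Prop :=
  ∀ D' : SInvDomain f, DomLE D' D → CyclicEq D' D

/-- A c-invariant (completely invariant) set. -/
def CInvariant {M T : Type*} (f : M → T → M) (C : Set M) : Prop :=
  ∀ x ∈ C, ∀ t : ℕ → T, ∀ k : ℕ, 1 ≤ k → pIter f k x t ∈ C

/-- The ω-limit of a point under a fixed perturbation vector. -/
def omegaPt {M T : Type*} [TopologicalSpace M] (f : M → T → M) (z : M) (t : ℕ → T) : Set M :=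
  {w | ∃ nseq : ℕ → ℕ, StrictMono nseq ∧
    Tendsto (fun j => pIter f (nseq j) z t) atTop (𝓝 w)}

/-- The ω-limit of a set under a fixed perturbation vector. -/
def omegaSet {M T : Type*} [TopologicalSpace M] (f : M → T → M) (U : Set M) (t : ℕ → T) :
    Set M :=
  {w | ∃ (u : ℕ → M) (nseq : ℕ → ℕ), (∀ j, u j ∈ U) ∧ StrictMono nseq ∧
    Tendsto (fun j => pIter f (nseq j) (u j) t) atTop (𝓝 w)}

/-- The ω-limit of a set under all perturbation vectors. -/
def omegaSetAll {M T : Type*} [TopologicalSpace M] (f : M → T → M) (U : Set M) : Set M :=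
  {w | ∃ (u : ℕ → M) (ts : ℕ → ℕ → T) (nseq : ℕ → ℕ), (∀ j, u j ∈ U) ∧ StrictMono nseq ∧
    Tendsto (fun j => pIter f (nseq j) (u j) (ts j)) atTop (𝓝 w)}

/-- A stationary probability measure for the perturbed system. -/
def Stationary {M T : Type*} [TopologicalSpace M] [MeasurableSpace M] [MeasurableSpace T]
    (f : M → T → M) (ν : Measure T) (μ : Measure M) : Prop :=
  ∀ φ : C(M, ℝ), ∫ z, (∫ t, φ (f z t) ∂ν) ∂μ = ∫ z, φ z ∂μ

/-- The skew product map `S(z,t) = (f_{t₁}(z), σ t)`. -/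
def skewProd {M T : Type*} (f : M → T → M) : M × (ℕ → T) → M × (ℕ → T) :=
  fun p => (f p.1 (p.2 0), fun i => p.2 (i + 1))

/-- The support of a measure: points all of whose open neighbourhoods have
positive measure. -/
def msupport {M : Type*} [TopologicalSpace M] [MeasurableSpace M] (μ : Measure M) : Set M :=
  {x | ∀ O : Set M, IsOpen O → x ∈ O → 0 < μ O}

/-- The ergodic basin `E(μ)` of a stationary measure: points whose time averages along
`ν^∞`-a.e. perturbed orbit converge to the space average of every continuous function. -/
def basin {M T : Type*} [TopologicalSpace M] [MeasurableSpace M] [MeasurableSpace T]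
    (f : M → T → M) (νinf : Measure (ℕ → T)) (μ : Measure M) : Set M :=
  {x | ∀ᵐ t ∂νinf, ∀ φ : C(M, ℝ),
    Tendsto (fun nn : ℕ => (nn : ℝ)⁻¹ * ∑ j ∈ Finset.range nn, φ (pIter f j x t))
      atTop (𝓝 (∫ z, φ z ∂μ))}


/-! ### Auxiliary lemmas -/

theorem pIter_add' {M T : Type*} (f : M → T → M) (j k : ℕ) (z : M) (t : ℕ → T) :
    pIter f (j + k) z t = pIter f k (pIter f j z t) (fun l => t (j + l)) := by
  induction k with
  | zero => rfl
  | succ k ih => show f (pIter f (j+k) z t) (t (j+k)) = _; rw [ih]; rfl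

theorem pIter_congr' {M T : Type*} (f : M → T → M) (k : ℕ) (z : M) {t t' : ℕ → T}
    (h : ∀ l < k, t l = t' l) : pIter f k z t = pIter f k z t' := by
  induction k with
  | zero => rfl
  | succ k ih =>
    simp only [pIter, ih (fun l hl => h l (Nat.lt_succ_of_lt hl)), h k (Nat.lt_succ_self k)]

theorem continuous_pIter' {M T : Type*} [TopologicalSpace M] [TopologicalSpace T]
    {f : M → T → M} (hfc : Continuous fun p : M × T => f p.1 p.2) (k : ℕ) :
    Continuous fun p : M × (ℕ → T) => pIter f k p.1 p.2 := by
  induction k with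
  | zero => exact continuous_fst
  | succ k ih =>
    exact hfc.comp (ih.prodMk ((continuous_apply k).comp continuous_snd))

theorem isOpen_carrier' {M T : Type*} [TopologicalSpace M] {f : M → T → M}
    (D : SInvDomain f) : IsOpen D.carrier := isOpen_iUnion D.isOpen

/-- restriction to the first `j` coordinates -/
def prefixMap (T : Type*) (j : ℕ) : (ℕ → T) → (Fin j → T) := fun t i => t i

theorem measurable_prefixMap {T : Type*} [MeasurableSpace T] (j : ℕ) :
    Measurable (prefixMap T j) :=
  measurable_pi_lambda _ fun _ => measurable_pi_apply _

/-- the algebra of prefix events -/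
def prefixAlg (T : Type*) [MeasurableSpace T] : Set (Set (ℕ → T)) :=
  {S | ∃ (j : ℕ) (E : Set (Fin j → T)), MeasurableSet E ∧ S = prefixMap T j ⁻¹' E}

theorem prefixAlg_lift {T : Type*} {j j' : ℕ} (h : j ≤ j') (E : Set (Fin j → T)) :
    prefixMap T j ⁻¹' E =
      prefixMap T j' ⁻¹' ((fun (v : Fin j' → T) (i : Fin j) => v (Fin.castLE h i)) ⁻¹' E) := rfl

theorem measurable_castLE_restrict {T : Type*} [MeasurableSpace T] {j j' : ℕ} (h : j ≤ j') :
    Measurable (fun (v : Fin j' → T) (i : Fin j) => v (Fin.castLE h i)) :=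
  measurable_pi_lambda _ fun _ => measurable_pi_apply _

theorem isSetAlgebra_prefixAlg {T : Type*} [MeasurableSpace T] :
    IsSetAlgebra (prefixAlg T) := by
  constructor
  · exact ⟨0, ∅, MeasurableSet.empty, by simp⟩
  · rintro s ⟨j, E, hE, rfl⟩
    exact ⟨j, Eᶜ, hE.compl, by rw [preimage_compl]⟩
  · rintro s t ⟨j, E, hE, rfl⟩ ⟨j', E', hE', rfl⟩
    rcases le_total j j' with h | h
    · refine ⟨j', _, ((measurable_castLE_restrict h) hE).union hE', ?_⟩
      rw [preimage_union, ← prefixAlg_lift h]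
    · refine ⟨j, _, hE.union ((measurable_castLE_restrict h) hE'), ?_⟩
      rw [preimage_union, ← prefixAlg_lift h]

theorem generateFrom_prefixAlg {T : Type*} [MeasurableSpace T] :
    (MeasurableSpace.pi : MeasurableSpace (ℕ → T)) =
      MeasurableSpace.generateFrom (prefixAlg T) := by
  apply le_antisymm
  · refine iSup_le fun i => ?_
    rw [MeasurableSpace.comap_le_iff_le_map]
    intro s hs
    apply MeasurableSpace.measurableSet_generateFrom
    exact ⟨i + 1, (fun v : Fin (i+1) → T => v ⟨i, Nat.lt_succ_self i⟩) ⁻¹' s,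
      (measurable_pi_apply _) hs, rfl⟩
  · rw [MeasurableSpace.generateFrom_le_iff]
    rintro s ⟨j, E, hE, rfl⟩
    exact (measurable_prefixMap j) hE

/-- block event at positions `j, …, j+k-1` -/
def blockSet {T : Type*} (j k : ℕ) (B : Fin k → Set T) : Set (ℕ → T) :=
  {θ | ∀ l : Fin k, θ (j + l) ∈ B l}

theorem measurableSet_blockSet {T : Type*} [MeasurableSpace T] (j k : ℕ) {B : Fin k → Set T}
    (hB : ∀ l, MeasurableSet (B l)) : MeasurableSet (blockSet j k B) := by
  have : blockSet j k B = ⋂ l : Fin k, (fun θ : ℕ → T => θ (j + l)) ⁻¹' (B l) := by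
    ext θ; simp [blockSet]
  rw [this]
  exact MeasurableSet.iInter fun l => (measurable_pi_apply _) (hB l)

theorem prefix_inter_block {T : Type*} (j k : ℕ) (s : Fin j → Set T) (B : Fin k → Set T) :
    prefixMap T j ⁻¹' (univ.pi s) ∩ blockSet j k B =
      prefixMap T (j + k) ⁻¹' (univ.pi fun i : Fin (j + k) =>
        if h : (i : ℕ) < j then s ⟨i, h⟩ else B ⟨(i : ℕ) - j, by omega⟩) := by
  ext θ
  simp only [mem_inter_iff, mem_preimage, Set.mem_pi, mem_univ, forall_true_left, blockSet,
    mem_setOf_eq, prefixMap]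
  constructor
  · rintro ⟨h1, h2⟩ i
    by_cases h : (i : ℕ) < j
    · simpa [h] using h1 ⟨i, h⟩
    · have hik : (i : ℕ) - j < k := by omega
      have heq : j + ((i : ℕ) - j) = (i : ℕ) := by omega
      simp only [dif_neg h]
      have h3 := h2 ⟨(i : ℕ) - j, hik⟩
      simp only [heq] at h3
      exact h3
  · intro h
    constructor
    · intro i
      have := h ⟨(i : ℕ), by omega⟩
      simpa [i.isLt] using this
    · intro l
      have hjl : ¬ ((j + (l : ℕ)) < j) := by omega
      have := h ⟨j + (l : ℕ), by omega⟩
      simp only [dif_neg hjl] at this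
      simpa [Nat.add_sub_cancel_left] using this

/-- Key independence identity. -/
theorem key_independence {T : Type*} [MeasurableSpace T] (νinf : Measure (ℕ → T))
    (ν : Measure T) [IsProbabilityMeasure ν]
    (hm : ∀ k : ℕ, νinf.map (prefixMap T k) = Measure.pi fun _ : Fin k => ν)
    (j k : ℕ) {E : Set (Fin j → T)} (hE : MeasurableSet E)
    {B : Fin k → Set T} (hB : ∀ l, MeasurableSet (B l)) :
    νinf (prefixMap T j ⁻¹' E ∩ blockSet j k B) =
      νinf (prefixMap T j ⁻¹' E) * ∏ l, ν (B l) := by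
  have hpm : ∀ m : ℕ, Measurable (prefixMap T m) := measurable_prefixMap
  have hpref : ∀ (m : ℕ) (F : Set (Fin m → T)), MeasurableSet F →
      νinf (prefixMap T m ⁻¹' F) = Measure.pi (fun _ : Fin m => ν) F := by
    intro m F hF
    rw [← hm m, Measure.map_apply (hpm m) hF]
  have hrect : ∀ s : Fin j → Set T, (∀ i, MeasurableSet (s i)) →
      νinf (prefixMap T j ⁻¹' (univ.pi s) ∩ blockSet j k B) =
        (∏ i, ν (s i)) * ∏ l, ν (B l) := by
    intro s hs
    rw [prefix_inter_block]
    rw [hpref (j + k) _ (MeasurableSet.univ_pi (fun i => by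
      split <;> [exact hs _; exact hB _]))]
    rw [Measure.pi_pi]
    rw [Fin.prod_univ_add (f := fun i : Fin (j+k) =>
      ν (if h : (i : ℕ) < j then s ⟨i, h⟩ else B ⟨(i : ℕ) - j, by omega⟩))]
    congr 1
    · apply Finset.prod_congr rfl
      intro i _
      have h : ((Fin.castAdd k i : Fin (j+k)) : ℕ) < j := i.isLt
      simp [dif_pos h]
    · apply Finset.prod_congr rfl
      intro l _
      have h : ¬ (((Fin.natAdd j l : Fin (j+k)) : ℕ) < j) := by simp [Fin.natAdd]
      simp only [dif_neg h]
      congr 1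
      ext
      simp [Fin.natAdd]
  set c := ∏ l, ν (B l) with hc
  have hc_le : c ≤ 1 := by
    calc c ≤ ∏ _l : Fin k, (1 : ENNReal) := Finset.prod_le_prod' fun l _ => prob_le_one
    _ = 1 := by simp
  have hc_ne_top : c ≠ ⊤ := (lt_of_le_of_lt hc_le ENNReal.one_lt_top).ne
  have hSb : MeasurableSet (blockSet j k B) := measurableSet_blockSet j k hB
  have hblock : νinf (blockSet j k B) = c := by
    have := hrect (fun _ => univ) (fun _ => MeasurableSet.univ)
    simpa using this
  rcases eq_or_ne c 0 with h0 | h0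
  · rw [h0, mul_zero]
    refine le_antisymm ?_ zero_le
    calc νinf (prefixMap T j ⁻¹' E ∩ blockSet j k B) ≤ νinf (blockSet j k B) :=
      measure_mono inter_subset_right
    _ = 0 := by rw [hblock, h0]
  · set μ' : Measure (Fin j → T) := (νinf.restrict (blockSet j k B)).map (prefixMap T j) with hμ'
    have hμ'app : ∀ F : Set (Fin j → T), MeasurableSet F →
        μ' F = νinf (prefixMap T j ⁻¹' F ∩ blockSet j k B) := by
      intro F hF
      rw [hμ', Measure.map_apply (hpm j) hF, Measure.restrict_apply ((hpm j) hF)]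
    have hpi : Measure.pi (fun _ : Fin j => ν) = c⁻¹ • μ' := by
      apply Measure.pi_eq
      intro s hs
      rw [Measure.smul_apply, smul_eq_mul, hμ'app _ (MeasurableSet.univ_pi hs), hrect s hs]
      rw [mul_comm ((∏ i, ν (s i))) c, ← mul_assoc, ENNReal.inv_mul_cancel h0 hc_ne_top, one_mul]
    have hEc : νinf (prefixMap T j ⁻¹' E) = c⁻¹ * μ' E := by
      rw [hpref j E hE, hpi, Measure.smul_apply, smul_eq_mul]
    rw [← hμ'app E hE, hEc, mul_comm, ← mul_assoc, ENNReal.mul_inv_cancel h0 hc_ne_top, one_mul]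

theorem ball_inter_vol_pos (n : ℕ) (a : EuclideanSpace ℝ (Fin n)) (ε : ℝ) (hε : 0 < ε)
    (x : EuclideanSpace ℝ (Fin n)) (hx : x ∈ Metric.closedBall a ε) (q : ℝ) (hq : 0 < q) :
    0 < volume (Metric.closedBall a ε ∩ Metric.ball x q) := by
  set lam : ℝ := min (q / (2 * ε)) 1 with hlam
  have hlam_pos : 0 < lam := lt_min (by positivity) one_pos
  have hlam_le1 : lam ≤ 1 := min_le_right _ _
  have hlamε : lam * ε ≤ q / 2 := by
    have : lam ≤ q / (2 * ε) := min_le_left _ _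
    calc lam * ε ≤ (q / (2 * ε)) * ε := by nlinarith
    _ = q / 2 := by field_simp
  set y := x + lam • (a - x) with hy
  set r : ℝ := min (lam * ε) (q / 2) with hr
  have hr_pos : 0 < r := lt_min (by positivity) (by positivity)
  have hax0 : dist x a ≤ ε := mem_closedBall.mp hx
  have hdyx : dist y x ≤ lam * ε := by
    rw [dist_eq_norm, hy]
    have h1 : x + lam • (a - x) - x = lam • (a - x) := by module
    rw [h1, norm_smul, Real.norm_of_nonneg hlam_pos.le]
    have hax : ‖a - x‖ ≤ ε := by rw [← dist_eq_norm, dist_comm]; exact hax0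
    nlinarith
  have hdya : dist y a ≤ (1 - lam) * ε := by
    rw [dist_eq_norm, hy]
    have h1 : x + lam • (a - x) - a = (1 - lam) • (x - a) := by module
    rw [h1, norm_smul, Real.norm_of_nonneg (by linarith)]
    have hax : ‖x - a‖ ≤ ε := by rw [← dist_eq_norm]; exact hax0
    nlinarith
  have hsub : Metric.ball y r ⊆ Metric.closedBall a ε ∩ Metric.ball x q := by
    intro w hw
    rw [mem_ball] at hw
    constructor
    · rw [mem_closedBall]
      have htri := dist_triangle w y a
      have h2 := min_le_left (lam * ε) (q / 2)
      nlinarith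
    · rw [mem_ball]
      have htri := dist_triangle w x y
      have htri2 := dist_triangle w y x
      have h1 := min_le_right (lam * ε) (q / 2)
      nlinarith
  calc (0 : ENNReal) < volume (Metric.ball y r) := measure_ball_pos _ _ hr_pos
  _ ≤ volume (Metric.closedBall a ε ∩ Metric.ball x q) := measure_mono hsub

theorem vol_cb_pos (n : ℕ) (a : EuclideanSpace ℝ (Fin n)) (ε : ℝ) (hε : 0 < ε) :
    0 < volume (Metric.closedBall a ε) :=
  lt_of_lt_of_le (measure_ball_pos _ _ hε) (measure_mono ball_subset_closedBall)

theorem comap_val_apply (n : ℕ) (a : EuclideanSpace ℝ (Fin n)) (ε : ℝ)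
    (ν : Measure ↥(Metric.closedBall a ε))
    (hν : ν = (volume (Metric.closedBall a ε))⁻¹ •
      ((volume : Measure (EuclideanSpace ℝ (Fin n))).comap Subtype.val))
    {s : Set ↥(Metric.closedBall a ε)} (hs : MeasurableSet s) :
    ν s = (volume (Metric.closedBall a ε))⁻¹ * volume (Subtype.val '' s) := by
  rw [hν, Measure.smul_apply, smul_eq_mul,
    Measure.comap_apply Subtype.val Subtype.val_injective
      (fun t ht => measurableSet_closedBall.subtype_image ht) _ hs]

theorem nu_prob (n : ℕ) (a : EuclideanSpace ℝ (Fin n)) (ε : ℝ) (hε : 0 < ε)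
    (ν : Measure ↥(Metric.closedBall a ε))
    (hν : ν = (volume (Metric.closedBall a ε))⁻¹ •
      ((volume : Measure (EuclideanSpace ℝ (Fin n))).comap Subtype.val)) :
    IsProbabilityMeasure ν := by
  constructor
  rw [comap_val_apply n a ε ν hν MeasurableSet.univ, image_univ, Subtype.range_coe]
  exact ENNReal.inv_mul_cancel (vol_cb_pos n a ε hε).ne' measure_closedBall_lt_top.ne

theorem nu_ball_pos (n : ℕ) (a : EuclideanSpace ℝ (Fin n)) (ε : ℝ) (hε : 0 < ε)
    (ν : Measure ↥(Metric.closedBall a ε))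
    (hν : ν = (volume (Metric.closedBall a ε))⁻¹ •
      ((volume : Measure (EuclideanSpace ℝ (Fin n))).comap Subtype.val))
    (x : ↥(Metric.closedBall a ε)) {q : ℝ} (hq : 0 < q) :
    0 < ν (Metric.ball x q) := by
  rw [comap_val_apply n a ε ν hν measurableSet_ball]
  have himg : Subtype.val '' (Metric.ball x q) =
      Metric.closedBall a ε ∩ Metric.ball (x : EuclideanSpace ℝ (Fin n)) q := by
    ext y
    constructor
    · rintro ⟨v, hv, rfl⟩
      exact ⟨v.2, by rwa [mem_ball, ← Subtype.dist_eq]⟩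
    · rintro ⟨hy, hy2⟩
      exact ⟨⟨y, hy⟩, by rwa [mem_ball, Subtype.dist_eq], rfl⟩
  rw [himg]
  have h1 : 0 < volume (Metric.closedBall a ε ∩ Metric.ball (x : EuclideanSpace ℝ (Fin n)) q) :=
    ball_inter_vol_pos n a ε hε x x.2 q hq
  have h2 : (0 : ENNReal) < (volume (Metric.closedBall a ε))⁻¹ :=
    ENNReal.inv_pos.mpr measure_closedBall_lt_top.ne
  exact ENNReal.mul_pos h2.ne' h1.ne'

theorem cyl_nhds {T : Type*} [PseudoMetricSpace T] {s : ℕ → T} {v : Set (ℕ → T)}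
    (hv : v ∈ 𝓝 s) : ∃ (K : ℕ) (δ : ℝ), 0 < δ ∧
      ∀ s' : ℕ → T, (∀ l < K, dist (s' l) (s l) < δ) → s' ∈ v := by
  rw [nhds_pi, Filter.mem_pi] at hv
  obtain ⟨I, hIfin, t, ht, hsub⟩ := hv
  obtain ⟨K, hK⟩ : ∃ K : ℕ, ∀ i ∈ I, i < K := by
    rcases hIfin.bddAbove with ⟨b, hb⟩
    exact ⟨b + 1, fun i hi => Nat.lt_succ_of_le (hb hi)⟩
  have hδi : ∀ i : ℕ, ∃ δ : ℝ, 0 < δ ∧ (i ∈ I → Metric.ball (s i) δ ⊆ t i) := by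
    intro i
    by_cases hi : i ∈ I
    · obtain ⟨δ, hδ, hball⟩ := Metric.mem_nhds_iff.mp (ht i)
      exact ⟨δ, hδ, fun _ => hball⟩
    · exact ⟨1, one_pos, fun h => absurd h hi⟩
  choose δf hδf hδf2 using hδi
  set J := hIfin.toFinset
  set δ : ℝ := (insert (1 : ℝ) (J.image δf)).min' (Finset.insert_nonempty _ _) with hδdef
  have hδpos : 0 < δ := by
    apply (Finset.lt_min'_iff _ _).mpr
    intro y hy
    rcases Finset.mem_insert.mp hy with rfl | hy
    · exact one_pos
    · obtain ⟨i, _, rfl⟩ := Finset.mem_image.mp hy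
      exact hδf i
  refine ⟨K, δ, hδpos, fun s' hs' => ?_⟩
  apply hsub
  intro i hi
  apply hδf2 i hi
  rw [Metric.mem_ball]
  have h1 : δ ≤ δf i := Finset.min'_le _ _
    (Finset.mem_insert_of_mem (Finset.mem_image_of_mem δf (hIfin.mem_toFinset.mpr hi)))
  exact lt_of_lt_of_le (hs' i (hK i hi)) h1

/-- extension of a finite tuple by a default value -/
def extMap {T : Type*} (d : T) (l : ℕ) : (Fin l → T) → (ℕ → T) :=
  fun v i => if h : i < l then v ⟨i, h⟩ else d

theorem measurable_extMap {T : Type*} [MeasurableSpace T] (d : T) (l : ℕ) :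
    Measurable (extMap d l) := by
  apply measurable_pi_lambda
  intro i
  unfold extMap
  by_cases h : i < l
  · simp only [dif_pos h]; exact measurable_pi_apply _
  · simp only [dif_neg h]; exact measurable_const

theorem extMap_prefix {T : Type*} (d : T) (j : ℕ) (θ : ℕ → T) :
    ∀ i < j, extMap d j (prefixMap T j θ) i = θ i := by
  intro i hi
  simp [extMap, prefixMap, dif_pos hi]

/-- If for `ν^∞`-a.e. `t ∈ V` every ω-limit point of `z` under `t` can
be sent into some minimal domain by some perturbation, then a positive measure subset of
`V` sends `z` into one and the same minimal domain at one and the same time. -/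
theorem statement7
    (n : ℕ) (hn : 1 ≤ n) (a : EuclideanSpace ℝ (Fin n)) (ε : ℝ) (hε : 0 < ε)
    (a₀ : PSpace n a ε) (ha₀ : (a₀ : EuclideanSpace ℝ (Fin n)) = a)
    (ν : Measure (PSpace n a ε))
    (hν : ν = (volume (Metric.closedBall a ε))⁻¹ •
      ((volume : Measure (EuclideanSpace ℝ (Fin n))).comap Subtype.val))
    (νinf : Measure (ℕ → PSpace n a ε)) (hprobν : IsProbabilityMeasure νinf)
    (hνinf : ∀ k : ℕ, νinf.map (fun t (i : Fin k) => t i) = Measure.pi fun _ => ν)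
    (M : Type*) [MetricSpace M] [CompactSpace M] [MeasurableSpace M] [BorelSpace M]
    (m : Measure M) (hmprob : IsProbabilityMeasure m)
    (hmpos : ∀ O : Set M, IsOpen O → O.Nonempty → 0 < m O)
    (f : M → PSpace n a ε → M)
    (hfc : Continuous fun p : M × PSpace n a ε => f p.1 p.2)
    (hfh : ∀ t : PSpace n a ε, IsHomeomorph fun z : M => f z t)
    (hfnull : ∀ (t : PSpace n a ε) (A : Set M), m A = 0 →
      m ((fun z => f z t) '' A) = 0 ∧ m ((fun z => f z t) ⁻¹' A) = 0)
    (z : M) (V : Set (ℕ → PSpace n a ε)) (hVmeas : MeasurableSet V) (hVpos : 0 < νinf V)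
    (hyp : ∀ᵐ t ∂νinf, t ∈ V → ∀ w ∈ omegaPt f z t,
      ∃ (s : ℕ → PSpace n a ε) (ℳ : SInvDomain f) (k : ℕ),
        MinimalDom ℳ ∧ pIter f k w s ∈ ℳ.carrier) :
    ∃ (ℳ : SInvDomain f) (W : Set (ℕ → PSpace n a ε)) (k : ℕ),
      MinimalDom ℳ ∧ MeasurableSet W ∧ W ⊆ V ∧ 0 < νinf W ∧
      ∀ θ ∈ W, pIter f k z θ ∈ ℳ.carrier := by
  classical
  haveI hνp : IsProbabilityMeasure ν := nu_prob n a ε hε ν hν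
  have hmarg : ∀ k : ℕ, νinf.map (prefixMap (PSpace n a ε) k) = Measure.pi fun _ : Fin k => ν :=
    hνinf
  -- remove the bad null set
  rw [ae_iff] at hyp
  obtain ⟨N₀, hN₀sub, hN₀meas, hN₀null⟩ := exists_measurable_superset_of_null hyp
  have hVN : νinf (V \ N₀) = νinf V := measure_diff_null hN₀null
  have hVNpos : 0 < νinf (V \ N₀) := by rw [hVN]; exact hVpos
  have hgoodpt : ∀ t ∈ V \ N₀, ∀ w ∈ omegaPt f z t,
      ∃ (s : ℕ → PSpace n a ε) (ℳ : SInvDomain f) (kk : ℕ),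
        MinimalDom ℳ ∧ pIter f kk w s ∈ ℳ.carrier := by
    intro t ht
    have h1 : ¬¬(t ∈ V → ∀ w ∈ omegaPt f z t, ∃ s ℳ kk, MinimalDom ℳ ∧
        pIter f kk w s ∈ SInvDomain.carrier ℳ) := fun hc => ht.2 (hN₀sub hc)
    exact (not_not.mp h1) ht.1
  -- countable basis of M
  obtain ⟨ℬ, hℬc, hℬne, hℬbasis⟩ := TopologicalSpace.exists_countable_basis M
  haveI : Countable ℬ := hℬc.to_subtype
  -- good indices
  have hiter_meas : ∀ (jj : ℕ) (b : Set M), IsOpen b →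
      MeasurableSet {θ : ℕ → PSpace n a ε | pIter f jj z θ ∈ b} := by
    intro jj b hb
    have hcont : Continuous fun θ : ℕ → PSpace n a ε => pIter f jj z θ := by
      have h2 : (fun θ : ℕ → PSpace n a ε => pIter f jj z θ) =
          (fun p : M × (ℕ → PSpace n a ε) => pIter f jj p.1 p.2) ∘ (fun θ => (z, θ)) := rfl
      rw [h2]
      exact (continuous_pIter' hfc jj).comp (continuous_const.prodMk continuous_id)
    exact hcont.measurable hb.measurableSet
  -- the covering claim
  have hcover : ∀ t ∈ V \ N₀, ∃ p : {p : ↥ℬ × ℕ × ℚ // (0 : ℝ) < ((p.2.2 : ℚ) : ℝ) ∧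
      ∃ (s : ℕ → PSpace n a ε) (ℳ : SInvDomain f), MinimalDom ℳ ∧
      ∀ w' ∈ (p.1 : Set M), ∀ s' : ℕ → PSpace n a ε,
        (∀ l < p.2.1, dist (s' l) (s l) < ((p.2.2 : ℚ) : ℝ)) →
          pIter f p.2.1 w' s' ∈ SInvDomain.carrier ℳ},
      ∀ J : ℕ, ∃ j, J ≤ j ∧ pIter f j z t ∈ ((p : ↥ℬ × ℕ × ℚ).1 : Set M) := by
    intro t ht
    obtain ⟨w, -, φ, hφ, hlim⟩ := isCompact_univ.tendsto_subseq
      (x := fun j => pIter f j z t) (fun _ => Set.mem_univ _)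
    have hw : w ∈ omegaPt f z t := ⟨φ, hφ, hlim⟩
    obtain ⟨s, ℳ, kk, hmin, hcar⟩ := hgoodpt t ht w hw
    have hopen : IsOpen ((fun pr : M × (ℕ → PSpace n a ε) =>
        pIter f kk pr.1 pr.2) ⁻¹' ℳ.carrier) :=
      (isOpen_carrier' ℳ).preimage (continuous_pIter' hfc kk)
    have hmem : ((w, s) : M × (ℕ → PSpace n a ε)) ∈
        (fun pr : M × (ℕ → PSpace n a ε) => pIter f kk pr.1 pr.2) ⁻¹' ℳ.carrier := hcar
    have hnhds := hopen.mem_nhds hmem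
    rw [mem_nhds_prod_iff] at hnhds
    obtain ⟨u, hu, v, hv, huv⟩ := hnhds
    obtain ⟨K, δ, hδ, hcyl⟩ := cyl_nhds hv
    obtain ⟨q, hq0, hqδ⟩ := exists_rat_btwn hδ
    obtain ⟨b, hbmem, hwb, hbu⟩ := hℬbasis.mem_nhds_iff.mp hu
    have hgood : (0 : ℝ) < ((q : ℚ) : ℝ) ∧ ∃ (s₁ : ℕ → PSpace n a ε) (ℳ₁ : SInvDomain f),
        MinimalDom ℳ₁ ∧ ∀ w' ∈ ((⟨b, hbmem⟩ : ↥ℬ) : Set M), ∀ s' : ℕ → PSpace n a ε,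
          (∀ l < kk, dist (s' l) (s₁ l) < ((q : ℚ) : ℝ)) →
            pIter f kk w' s' ∈ SInvDomain.carrier ℳ₁ := by
      refine ⟨hq0, s, ℳ, hmin, ?_⟩
      intro w' hw' s' hs'
      have h5 : pIter f kk w' (fun l => if l < kk then s' l else s l) ∈ ℳ.carrier := by
        have h7 : ((w', fun l => if l < kk then s' l else s l) : M × (ℕ → PSpace n a ε)) ∈
            (fun pr : M × (ℕ → PSpace n a ε) => pIter f kk pr.1 pr.2) ⁻¹' ℳ.carrier := by
          apply huv
          refine Set.mk_mem_prod (hbu hw') (hcyl _ ?_)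
          intro l hl
          by_cases h : l < kk
          · simp only [if_pos h]
            exact lt_trans (hs' l h) hqδ
          · simp only [if_neg h, dist_self]
            exact hδ
        exact h7
      have h6 : pIter f kk w' s' = pIter f kk w' (fun l => if l < kk then s' l else s l) :=
        pIter_congr' f kk w' (fun l hl => by simp [if_pos hl])
      rw [h6]
      exact h5
    refine ⟨⟨(⟨b, hbmem⟩, kk, q), hgood⟩, ?_⟩
    intro J
    have hbopen : b ∈ 𝓝 w := (hℬbasis.isOpen hbmem).mem_nhds hwb
    have hev : {j : ℕ | pIter f (φ j) z t ∈ b} ∈ atTop := hlim hbopen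
    rw [Filter.mem_atTop_sets] at hev
    obtain ⟨j₁, hj₁⟩ := hev
    refine ⟨φ (max J j₁), le_trans (le_max_left J j₁) (hφ.le_apply), ?_⟩
    exact hj₁ (max J j₁) (le_max_right J j₁)
  -- choose the data
  choose sF MF hminF himpF using fun p : {p : ↥ℬ × ℕ × ℚ // (0 : ℝ) < ((p.2.2 : ℚ) : ℝ) ∧
      ∃ (s : ℕ → PSpace n a ε) (ℳ : SInvDomain f), MinimalDom ℳ ∧
      ∀ w' ∈ (p.1 : Set M), ∀ s' : ℕ → PSpace n a ε,
        (∀ l < p.2.1, dist (s' l) (s l) < ((p.2.2 : ℚ) : ℝ)) →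
          pIter f p.2.1 w' s' ∈ SInvDomain.carrier ℳ} => p.2.2
  -- the sets with infinitely many trials
  have hYgmeas : ∀ p : ↥ℬ × ℕ × ℚ, MeasurableSet ((V \ N₀) ∩
      {θ | ∀ J : ℕ, ∃ j, J ≤ j ∧ pIter f j z θ ∈ (p.1 : Set M)}) := by
    intro p
    apply (hVmeas.diff hN₀meas).inter
    have h3 : {θ : ℕ → PSpace n a ε | ∀ J : ℕ, ∃ j, J ≤ j ∧ pIter f j z θ ∈ (p.1 : Set M)} =
        ⋂ J : ℕ, ⋃ j : ℕ, ⋃ (_ : J ≤ j),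
          {θ : ℕ → PSpace n a ε | pIter f j z θ ∈ (p.1 : Set M)} := by
      ext θ; simp [Set.mem_iInter, Set.mem_iUnion]
    rw [h3]
    exact MeasurableSet.iInter fun J => MeasurableSet.iUnion fun j => MeasurableSet.iUnion
      fun _ => hiter_meas j _ (hℬbasis.isOpen p.1.2)
  -- some Yg has positive measure
  obtain ⟨p, hppos⟩ : ∃ p : {p : ↥ℬ × ℕ × ℚ // (0 : ℝ) < ((p.2.2 : ℚ) : ℝ) ∧
      ∃ (s : ℕ → PSpace n a ε) (ℳ : SInvDomain f), MinimalDom ℳ ∧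
      ∀ w' ∈ (p.1 : Set M), ∀ s' : ℕ → PSpace n a ε,
        (∀ l < p.2.1, dist (s' l) (s l) < ((p.2.2 : ℚ) : ℝ)) →
          pIter f p.2.1 w' s' ∈ SInvDomain.carrier ℳ}, 0 < νinf ((V \ N₀) ∩
      {θ | ∀ J : ℕ, ∃ j, J ≤ j ∧ pIter f j z θ ∈ (((p : ↥ℬ × ℕ × ℚ)).1 : Set M)}) := by
    by_contra hcon
    push_neg at hcon
    have hsubU : (V \ N₀) ⊆ ⋃ p : {p : ↥ℬ × ℕ × ℚ // (0 : ℝ) < ((p.2.2 : ℚ) : ℝ) ∧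
      ∃ (s : ℕ → PSpace n a ε) (ℳ : SInvDomain f), MinimalDom ℳ ∧
      ∀ w' ∈ (p.1 : Set M), ∀ s' : ℕ → PSpace n a ε,
        (∀ l < p.2.1, dist (s' l) (s l) < ((p.2.2 : ℚ) : ℝ)) →
          pIter f p.2.1 w' s' ∈ SInvDomain.carrier ℳ}, ((V \ N₀) ∩
        {θ | ∀ J : ℕ, ∃ j, J ≤ j ∧ pIter f j z θ ∈ (((p : ↥ℬ × ℕ × ℚ)).1 : Set M)}) := by
      intro t ht
      obtain ⟨p, hp⟩ := hcover t ht
      exact Set.mem_iUnion.mpr ⟨p, ht, hp⟩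
    have h4 : νinf (V \ N₀) = 0 := le_antisymm
      (le_trans (measure_mono hsubU)
        (le_of_eq (measure_iUnion_null fun p =>
          le_antisymm (hcon p) zero_le))) zero_le
    rw [h4] at hVNpos
    exact lt_irrefl _ hVNpos
  -- fix the data of the chosen index
  set b : Set M := ((p : ↥ℬ × ℕ × ℚ).1 : Set M) with hbdef
  set k : ℕ := (p : ↥ℬ × ℕ × ℚ).2.1 with hkdef
  set qr : ℝ := (((p : ↥ℬ × ℕ × ℚ).2.2 : ℚ) : ℝ) with hqrdef
  have hbopen : IsOpen b := hℬbasis.isOpen (p : ↥ℬ × ℕ × ℚ).1.2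
  have hq : 0 < qr := p.2.1
  set s : ℕ → PSpace n a ε := sF p with hsdef
  set Y : Set (ℕ → PSpace n a ε) :=
    (V \ N₀) ∩ {θ | ∀ J : ℕ, ∃ j, J ≤ j ∧ pIter f j z θ ∈ b} with hYdef
  have hYmeas : MeasurableSet Y := hYgmeas (p : ↥ℬ × ℕ × ℚ)
  have hYpos : 0 < νinf Y := hppos
  have hYsubV : Y ⊆ V := fun θ hθ => hθ.1.1
  -- the block of parameter balls
  set B : Fin k → Set (PSpace n a ε) := fun l => Metric.ball (s l) qr with hBdef
  have hB : ∀ l, MeasurableSet (B l) := fun l => measurableSet_ball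
  set c : ENNReal := ∏ l, ν (B l) with hcdef
  have hc0 : 0 < c := CanonicallyOrderedAdd.prod_pos.mpr
    (fun l _ => nu_ball_pos n a ε hε ν hν (s l) hq)
  have hc1 : c ≤ 1 := by
    calc c ≤ ∏ _l : Fin k, (1 : ENNReal) := Finset.prod_le_prod' fun l _ => prob_le_one
    _ = 1 := by simp
  have hcne : c ≠ ⊤ := (lt_of_le_of_lt hc1 ENNReal.one_lt_top).ne
  set y : ENNReal := νinf Y with hydef
  have hy0 : 0 < y := hYpos
  have hyne : y ≠ ⊤ := measure_ne_top _ _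
  set d : ENNReal := c * y with hddef
  have hd0 : 0 < d := ENNReal.mul_pos hc0.ne' hy0.ne'
  have hdne : d ≠ ⊤ := ENNReal.mul_ne_top hcne hyne
  -- approximate Y by a prefix event
  have hMD : νinf.MeasureDense (prefixAlg (PSpace n a ε)) :=
    Measure.MeasureDense.of_generateFrom_isSetAlgebra_finite
      νinf isSetAlgebra_prefixAlg generateFrom_prefixAlg
  have hηr : 0 < d.toReal / 8 := by
    have := ENNReal.toReal_pos hd0.ne' hdne
    positivity
  obtain ⟨A, hA𝒜, hAsym⟩ := hMD.approx Y hYmeas (measure_ne_top _ _) (d.toReal / 8) hηr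
  have hofReal : ENNReal.ofReal (d.toReal / 8) = d / 8 := by
    rw [ENNReal.ofReal_div_of_pos (by norm_num), ENNReal.ofReal_toReal hdne]
    norm_num
  rw [hofReal] at hAsym
  obtain ⟨j₀, A₀, hA₀meas, hAeq⟩ := hA𝒜
  have hAmeas : MeasurableSet A := by
    rw [hAeq]; exact (measurable_prefixMap j₀) hA₀meas
  have hAdY : νinf (A \ Y) < d / 8 :=
    lt_of_le_of_lt (measure_mono (by rw [Set.symmDiff_def]; exact Set.subset_union_right)) hAsym
  have hYdA : νinf (Y \ A) < d / 8 :=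
    lt_of_le_of_lt (measure_mono (by rw [Set.symmDiff_def]; exact Set.subset_union_left)) hAsym
  have hYcapA : y < νinf (Y ∩ A) + d / 8 := by
    have h1 : y ≤ νinf (Y ∩ A) + νinf (Y \ A) := by
      calc y = νinf ((Y ∩ A) ∪ (Y \ A)) := by rw [Set.inter_union_diff]
      _ ≤ νinf (Y ∩ A) + νinf (Y \ A) := measure_union_le _ _
    exact lt_of_le_of_lt h1 (ENNReal.add_lt_add_left (measure_ne_top _ _) hYdA)
  -- continuity of iterates in the parameter
  have hcontIter : ∀ jj : ℕ, Continuous fun θ : ℕ → PSpace n a ε => pIter f jj z θ := by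
    intro jj
    have h2 : (fun θ : ℕ → PSpace n a ε => pIter f jj z θ) =
        (fun pr : M × (ℕ → PSpace n a ε) => pIter f jj pr.1 pr.2) ∘ (fun θ => (z, θ)) := rfl
    rw [h2]
    exact (continuous_pIter' hfc jj).comp (continuous_const.prodMk continuous_id)
  -- the first-trial decomposition
  set F : (j : ℕ) → Set (Fin j → PSpace n a ε) := fun j =>
    (extMap a₀ j ⁻¹' A) ∩
    (⋂ l : ℕ, ⋂ (_ : j₀ ≤ l), ⋂ (_ : l < j), {v | pIter f l z (extMap a₀ j v) ∉ b}) ∩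
    {v | pIter f j z (extMap a₀ j v) ∈ b} with hFdef
  have hFmeas : ∀ j, MeasurableSet (F j) := by
    intro j
    refine MeasurableSet.inter (MeasurableSet.inter ?_ ?_) ?_
    · exact (measurable_extMap a₀ j) hAmeas
    · refine MeasurableSet.iInter fun l => MeasurableSet.iInter fun _ =>
        MeasurableSet.iInter fun _ => ?_
      exact (((hcontIter l).measurable.comp (measurable_extMap a₀ j)) hbopen.measurableSet).compl
    · exact ((hcontIter j).measurable.comp (measurable_extMap a₀ j)) hbopen.measurableSet
  set E : ℕ → Set (ℕ → PSpace n a ε) := fun j =>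
    if j₀ ≤ j then prefixMap (PSpace n a ε) j ⁻¹' (F j) else ∅ with hEdef
  have hEmeas : ∀ j, MeasurableSet (E j) := by
    intro j
    simp only [hEdef]
    split
    · exact (measurable_prefixMap j) (hFmeas j)
    · exact MeasurableSet.empty
  have hEchar : ∀ j, j₀ ≤ j → ∀ θ, θ ∈ E j ↔
      (θ ∈ A ∧ (∀ l, j₀ ≤ l → l < j → pIter f l z θ ∉ b) ∧ pIter f j z θ ∈ b) := by
    intro j hj θ
    have hext_eq : ∀ l ≤ j,
        pIter f l z (extMap a₀ j (prefixMap (PSpace n a ε) j θ)) = pIter f l z θ :=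
      fun l hl => pIter_congr' f l z
        (fun i hi => extMap_prefix a₀ j θ i (lt_of_lt_of_le hi hl))
    have hApre : extMap a₀ j (prefixMap (PSpace n a ε) j θ) ∈ A ↔ θ ∈ A := by
      rw [hAeq]
      have h5 : prefixMap (PSpace n a ε) j₀ (extMap a₀ j (prefixMap (PSpace n a ε) j θ)) =
          prefixMap (PSpace n a ε) j₀ θ :=
        funext fun i => extMap_prefix a₀ j θ i (lt_of_lt_of_le i.2 hj)
      simp only [Set.mem_preimage, h5]
    simp only [hEdef, if_pos hj, Set.mem_preimage, hFdef, Set.mem_inter_iff, Set.mem_iInter,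
      Set.mem_setOf_eq]
    constructor
    · rintro ⟨⟨h1, h2⟩, h3⟩
      refine ⟨hApre.mp h1, ?_, ?_⟩
      · intro l hl1 hl2
        have := h2 l hl1 hl2
        rwa [hext_eq l (le_of_lt hl2)] at this
      · rwa [hext_eq j le_rfl] at h3
    · rintro ⟨h1, h2, h3⟩
      refine ⟨⟨hApre.mpr h1, ?_⟩, ?_⟩
      · intro l hl1 hl2
        rw [hext_eq l (le_of_lt hl2)]
        exact h2 l hl1 hl2
      · rwa [hext_eq j le_rfl]
  have hEsubA : ∀ j, E j ⊆ A := by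
    intro j
    by_cases hj : j₀ ≤ j
    · intro θ hθ
      exact ((hEchar j hj θ).mp hθ).1
    · simp only [hEdef, if_neg hj]; exact Set.empty_subset _
  have hEkey : ∀ i j, i < j → Disjoint (E i) (E j) := by
    intro i j hij
    by_cases hi : j₀ ≤ i
    · rw [Set.disjoint_left]
      intro θ hθi hθj
      have h1 := ((hEchar i hi θ).mp hθi).2.2
      have h2 := ((hEchar j (le_trans hi (le_of_lt hij)) θ).mp hθj).2.1 i hi hij
      exact h2 h1
    · simp only [hEdef, if_neg hi]
      exact Set.empty_disjoint _
  have hEdisj : Pairwise (Function.onFun Disjoint E) := by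
    intro i j hij
    rcases lt_or_gt_of_ne hij with h | h
    · exact hEkey i j h
    · exact (hEkey j i h).symm
  have hEcover : Y ∩ A ⊆ ⋃ j, E j := by
    intro θ hθ
    obtain ⟨j₁, hj₁, hj₁b⟩ := hθ.1.2 j₀
    have hP : ∃ jj, j₀ ≤ jj ∧ pIter f jj z θ ∈ b := ⟨j₁, hj₁, hj₁b⟩
    set jm := Nat.find hP with hjm
    refine Set.mem_iUnion.mpr ⟨jm, ?_⟩
    have hspec := Nat.find_spec hP
    rw [hEchar jm hspec.1 θ]
    refine ⟨hθ.2, ?_, hspec.2⟩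
    intro l hl1 hl2
    intro hlb
    exact Nat.find_min hP hl2 ⟨hl1, hlb⟩
  have hkey : ∀ j, j₀ ≤ j → νinf (E j ∩ blockSet j k B) = νinf (E j) * c := by
    intro j hj
    simp only [hEdef, if_pos hj, hcdef]
    exact key_independence νinf ν hmarg j k (hFmeas j) hB
  -- select a good first-trial time
  have hsel : ∃ j, νinf (E j) ≠ 0 ∧ νinf (E j \ Y) < (c / 2) * νinf (E j) := by
    by_contra hcon
    push_neg at hcon
    have hdisj' : Pairwise (Function.onFun Disjoint (fun j => E j \ Y)) :=
      fun i j hij => Disjoint.mono Set.diff_subset Set.diff_subset (hEdisj hij)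
    have hsum1 : (c / 2) * νinf (Y ∩ A) ≤ νinf (A \ Y) := by
      calc (c / 2) * νinf (Y ∩ A) ≤ (c / 2) * νinf (⋃ j, E j) :=
        mul_le_mul_right (measure_mono hEcover) _
      _ = (c / 2) * ∑' j, νinf (E j) := by rw [measure_iUnion hEdisj hEmeas]
      _ = ∑' j, (c / 2) * νinf (E j) := ENNReal.tsum_mul_left.symm
      _ ≤ ∑' j, νinf (E j \ Y) := by
        refine ENNReal.tsum_le_tsum fun j => ?_
        by_cases hz : νinf (E j) = 0
        · rw [hz, mul_zero]; exact zero_le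
        · exact hcon j hz
      _ = νinf (⋃ j, (E j \ Y)) :=
        (measure_iUnion hdisj' (fun j => (hEmeas j).diff hYmeas)).symm
      _ ≤ νinf (A \ Y) := measure_mono
        (Set.iUnion_subset fun j => Set.diff_subset_diff_left (hEsubA j))
    have hlt : (c / 2) * νinf (Y ∩ A) < d / 8 := lt_of_le_of_lt hsum1 hAdY
    have h8 : d / 8 = (c / 2) * (y / 4) := by
      rw [hddef]
      rw [div_eq_mul_inv, div_eq_mul_inv, div_eq_mul_inv]
      have hinv : (8 : ENNReal)⁻¹ = 2⁻¹ * 4⁻¹ := by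
        rw [← ENNReal.mul_inv (by norm_num) (by norm_num)]
        norm_num
      rw [hinv]
      ring
    have hc20 : (c / 2 : ENNReal) ≠ 0 := by
      simp only [ne_eq, ENNReal.div_eq_zero_iff]
      push_neg
      exact ⟨hc0.ne', by norm_num⟩
    have hc2t : (c / 2 : ENNReal) ≠ ⊤ := (ENNReal.div_lt_top hcne (by norm_num)).ne
    have hYA4 : νinf (Y ∩ A) < y / 4 := by
      rw [h8] at hlt
      exact (ENNReal.mul_lt_mul_iff_right hc20 hc2t).mp hlt
    have hdy8 : d / 8 ≤ y / 8 :=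
      ENNReal.div_le_div_right (by rw [hddef]; exact mul_le_of_le_one_left (zero_le (a := y)) hc1) 8
    have hfin : y < y := by
      calc y < νinf (Y ∩ A) + d / 8 := hYcapA
      _ ≤ y / 4 + y / 8 := add_le_add hYA4.le hdy8
      _ ≤ y / 2 + y / 2 := add_le_add
        (ENNReal.div_le_div_left (by norm_num) y)
        (ENNReal.div_le_div_left (by norm_num) y)
      _ = y := ENNReal.add_halves y
    exact lt_irrefl y hfin
  obtain ⟨j, hEne, hEY⟩ := hsel
  have hj0 : j₀ ≤ j := by
    by_contra hcontra
    apply hEne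
    simp only [hEdef, if_neg hcontra, measure_empty]
  -- the final set
  refine ⟨MF p, (E j ∩ blockSet j k B) ∩ Y, j + k, hminF p,
    ((hEmeas j).inter (measurableSet_blockSet j k hB)).inter hYmeas,
    fun θ hθ => hYsubV hθ.2, ?_, ?_⟩
  · -- positive measure
    by_contra h0
    push_neg at h0
    have h0' : νinf ((E j ∩ blockSet j k B) ∩ Y) = 0 := le_antisymm h0 zero_le
    have hsplit : E j ∩ blockSet j k B ⊆ ((E j ∩ blockSet j k B) ∩ Y) ∪ (E j \ Y) := by
      intro θ hθ
      by_cases hy : θ ∈ Y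
      · exact Or.inl ⟨hθ, hy⟩
      · exact Or.inr ⟨hθ.1, hy⟩
    have hchain : νinf (E j) * c ≤ (c / 2) * νinf (E j) := by
      calc νinf (E j) * c = νinf (E j ∩ blockSet j k B) := (hkey j hj0).symm
      _ ≤ νinf ((E j ∩ blockSet j k B) ∩ Y) + νinf (E j \ Y) :=
        le_trans (measure_mono hsplit) (measure_union_le _ _)
      _ = νinf (E j \ Y) := by rw [h0', zero_add]
      _ ≤ (c / 2) * νinf (E j) := hEY.le
    have hstrict : (c / 2) * νinf (E j) < νinf (E j) * c := by
      rw [mul_comm (νinf (E j)) c]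
      exact (ENNReal.mul_lt_mul_iff_left hEne (measure_ne_top _ _)).mpr
        (ENNReal.half_lt_self hc0.ne' hcne)
    exact lt_irrefl _ (lt_of_le_of_lt hchain hstrict)
  · -- landing in the carrier
    intro θ hθ
    have hEj : θ ∈ E j := hθ.1.1
    have hblk : θ ∈ blockSet j k B := hθ.1.2
    have hbmem2 : pIter f j z θ ∈ b := ((hEchar j hj0 θ).mp hEj).2.2
    have hs' : ∀ l < k, dist (θ (j + l)) (s l) < qr := by
      intro l hl
      have h9 := hblk ⟨l, hl⟩
      simp only [hBdef] at h9
      rw [Metric.mem_ball] at h9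
      exact h9
    have happ := himpF p (pIter f j z θ) hbmem2 (fun l => θ (j + l)) hs'
    rw [pIter_add']
    exact happ

end
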